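/- Let V• be a bounded cochain complex of finite-dimensional complex inner product spaces, with Laplacian Δ_i = d_{i−1}d_{i−1}^* + d_i^*d_i on V_i. Then V_i decomposes orthogonally as V_i = ker(Δ_i) ⊕ im(d_{i−1}) ⊕ im(d_i^*), and ker(Δ_i) = ker(d_i) ∩ ker(d_{i−1}^*). -/

import Mathlib

/-!
For `A : U → E` and `B : E → F` the Laplacian `Δ = A A† + B† B` satisfies
`re ⟪Δ x, x⟫ = ‖A† x‖² + ‖B x‖²`, so `ker Δ = ker B ⊓ ker A†`. In finite dimension
`ker A† = (range A)ᗮ` and `ker B = (range B†)ᗮ`, hence `ker Δ = (range A ⊔ range B†)ᗮ`,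
which gives the orthogonal decomposition; `range A ⟂ range B†` is `B ∘ A = 0`.
-/

open LinearMap Submodule

namespace LinearMap

variable {𝕜 U E F : Type*} [RCLike 𝕜]
  [NormedAddCommGroup U] [InnerProductSpace 𝕜 U]
  [NormedAddCommGroup E] [InnerProductSpace 𝕜 E] [FiniteDimensional 𝕜 E]
  [NormedAddCommGroup F] [InnerProductSpace 𝕜 F] [FiniteDimensional 𝕜 F]

lemma ker_eq_orthogonal_range_adjoint (B : E →ₗ[𝕜] F) : ker B = (range (adjoint B))ᗮ := by
  rw [orthogonal_range, adjoint_adjoint]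

lemma range_le_orthogonal_range_adjoint {A : U →ₗ[𝕜] E} {B : E →ₗ[𝕜] F} (hBA : B ∘ₗ A = 0) :
    range A ≤ (range (adjoint B))ᗮ := by
  rw [← ker_eq_orthogonal_range_adjoint, range_le_ker_iff, hBA]

variable [FiniteDimensional 𝕜 U]

lemma re_inner_laplacian_apply_self (A : U →ₗ[𝕜] E) (B : E →ₗ[𝕜] F) (x : E) :
    RCLike.re (inner 𝕜 ((A ∘ₗ adjoint A + adjoint B ∘ₗ B) x) x) =
      ‖adjoint A x‖ ^ 2 + ‖B x‖ ^ 2 := by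
  rw [add_apply, comp_apply, comp_apply, inner_add_left, map_add,
    ← adjoint_inner_right A (adjoint A x), adjoint_inner_left B x (B x),
    inner_self_eq_norm_sq, inner_self_eq_norm_sq]

lemma ker_laplacian (A : U →ₗ[𝕜] E) (B : E →ₗ[𝕜] F) :
    ker (A ∘ₗ adjoint A + adjoint B ∘ₗ B) = ker B ⊓ ker (adjoint A) := by
  ext x
  simp only [mem_inf, mem_ker]
  constructor
  · intro hx
    have hsum : ‖adjoint A x‖ ^ 2 + ‖B x‖ ^ 2 = 0 := by
      rw [← re_inner_laplacian_apply_self, hx, inner_zero_left, map_zero]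
    obtain ⟨hA, hB⟩ := (add_eq_zero_iff_of_nonneg (by positivity) (by positivity)).mp hsum
    exact ⟨norm_eq_zero.mp (pow_eq_zero_iff two_ne_zero |>.mp hB),
      norm_eq_zero.mp (pow_eq_zero_iff two_ne_zero |>.mp hA)⟩
  · rintro ⟨hB, hA⟩
    simp [hA, hB]

lemma ker_inf_ker_adjoint_eq_orthogonal (A : U →ₗ[𝕜] E) (B : E →ₗ[𝕜] F) :
    ker B ⊓ ker (adjoint A) = (range A ⊔ range (adjoint B))ᗮ := by
  rw [ker_eq_orthogonal_range_adjoint, ← orthogonal_range, inf_orthogonal, sup_comm]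

lemma ker_inf_ker_adjoint_sup_range_sup_range_adjoint (A : U →ₗ[𝕜] E) (B : E →ₗ[𝕜] F) :
    ker B ⊓ ker (adjoint A) ⊔ range A ⊔ range (adjoint B) = ⊤ := by
  rw [ker_inf_ker_adjoint_eq_orthogonal, sup_assoc, sup_comm,
    sup_orthogonal_of_hasOrthogonalProjection]

end LinearMap

theorem stmt_17_general (V : ℕ → Type)
    [∀ i, NormedAddCommGroup (V i)] [∀ i, InnerProductSpace ℂ (V i)]
    [∀ i, FiniteDimensional ℂ (V i)]
    (d : ∀ i, V i →ₗ[ℂ] V (i + 1))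
    (hdd : ∀ i, (d (i + 1)) ∘ₗ (d i) = 0)
    (i : ℕ) :
    ∀ Δ : V (i + 1) →ₗ[ℂ] V (i + 1),
      Δ = (d i) ∘ₗ (LinearMap.adjoint (d i)) +
            (LinearMap.adjoint (d (i + 1))) ∘ₗ (d (i + 1)) →
      LinearMap.ker Δ =
          LinearMap.ker (d (i + 1)) ⊓ LinearMap.ker (LinearMap.adjoint (d i)) ∧
      LinearMap.ker Δ ⊔ LinearMap.range (d i) ⊔
          LinearMap.range (LinearMap.adjoint (d (i + 1))) = ⊤ ∧
      LinearMap.ker Δ ≤ (LinearMap.range (d i))ᗮ ∧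
      LinearMap.ker Δ ≤ (LinearMap.range (LinearMap.adjoint (d (i + 1))))ᗮ ∧
      LinearMap.range (d i) ≤ (LinearMap.range (LinearMap.adjoint (d (i + 1))))ᗮ := by
  rintro Δ rfl
  have hker := ker_laplacian (d i) (d (i + 1))
  have hharm := ker_inf_ker_adjoint_eq_orthogonal (d i) (d (i + 1))
  refine ⟨hker, ?_, ?_, ?_, range_le_orthogonal_range_adjoint (hdd i)⟩
  · rw [hker]
    exact ker_inf_ker_adjoint_sup_range_sup_range_adjoint (d i) (d (i + 1))
  · rw [hker, hharm]
    exact orthogonal_le le_sup_left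
  · rw [hker, hharm]
    exact orthogonal_le le_sup_right

theorem stmt_17 (V : ℕ → Type)
    [∀ i, NormedAddCommGroup (V i)] [∀ i, InnerProductSpace ℂ (V i)]
    [∀ i, FiniteDimensional ℂ (V i)]
    (d : ∀ i, V i →ₗ[ℂ] V (i + 1))
    (hdd : ∀ i, (d (i + 1)) ∘ₗ (d i) = 0)
    (N : ℕ) (hN : ∀ i, N < i → Subsingleton (V i)) (i : ℕ) :
    ∀ Δ : V (i + 1) →ₗ[ℂ] V (i + 1),
      Δ = (d i) ∘ₗ (LinearMap.adjoint (d i)) +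
            (LinearMap.adjoint (d (i + 1))) ∘ₗ (d (i + 1)) →
      LinearMap.ker Δ =
          LinearMap.ker (d (i + 1)) ⊓ LinearMap.ker (LinearMap.adjoint (d i)) ∧
      LinearMap.ker Δ ⊔ LinearMap.range (d i) ⊔
          LinearMap.range (LinearMap.adjoint (d (i + 1))) = ⊤ ∧
      LinearMap.ker Δ ≤ (LinearMap.range (d i))ᗮ ∧
      LinearMap.ker Δ ≤ (LinearMap.range (LinearMap.adjoint (d (i + 1))))ᗮ ∧
      LinearMap.range (d i) ≤ (LinearMap.range (LinearMap.adjoint (d (i + 1))))ᗮ :=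
  stmt_17_general V d hdd i
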